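/- arXiv:1610.02469 — 5 statements merged into one kernel-verified Lean document; each statement's English description precedes it below -/
import Mathlib

section
/- Let G and H be connected graphs and let Z be a subset of V(G) × V(H) that is gated in the Cartesian product G × H. Define X = {x ∈ V(G) : ∃y, (x,y) ∈ Z} and Y = {y ∈ V(H) : ∃x, (x,y) ∈ Z}. Then Z = X × Y. -/
/-- A nonempty vertex set `S` of a graph `G` is gated: every vertex `v` has a gate `g ∈ S`
lying on a shortest path from `v` to every member of `S`. -/
def Gated {V : Type*} (G : SimpleGraph V) (S : Set V) : Prop :=
  S.Nonempty ∧ ∀ v : V, ∃ g ∈ S, ∀ s ∈ S, G.dist v s = G.dist v g + G.dist g s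

/-!
Distances in `G □ H` add up coordinatewise, so a vertex `w` on a geodesic from `u` to `v` has
`w.1` on a geodesic from `u.1` to `v.1` in `G`, and likewise in `H`. Let `(x, y)` have the same
first coordinate as some point of `Z` and the same second coordinate as another. Its gate lies on
geodesics to both, so the gate's first coordinate is `x`, its second is `y`, and the gate is
`(x, y)` itself.
-/

namespace SimpleGraph

variable {α β : Type*} {G : SimpleGraph α} {H : SimpleGraph β}

lemma dist_boxProd {x y : α × β} (hG : G.Reachable x.1 y.1) (hH : H.Reachable x.2 y.2) :
    (G □ H).dist x y = G.dist x.1 y.1 + H.dist x.2 y.2 := by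
  have h : (G □ H).Reachable x y := reachable_boxProd.2 ⟨hG, hH⟩
  have := h.coe_dist_eq_edist.trans (edist_boxProd x y)
  rw [← hG.coe_dist_eq_edist, ← hH.coe_dist_eq_edist] at this
  exact_mod_cast this

variable (hG : G.Connected) (hH : H.Connected) {u v w : α × β}
include hG hH

lemma fst_eq_of_dist_boxProd_eq_add
    (h : (G □ H).dist u v = (G □ H).dist u w + (G □ H).dist w v) (huv : u.1 = v.1) :
    w.1 = u.1 := by
  rw [dist_boxProd (hG _ _) (hH _ _), dist_boxProd (hG _ _) (hH _ _),
    dist_boxProd (hG _ _) (hH _ _), huv, dist_self] at h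
  have : H.dist u.2 v.2 ≤ H.dist u.2 w.2 + H.dist w.2 v.2 := hH.dist_triangle
  have huw : G.dist v.1 w.1 = 0 := by omega
  rw [huv]
  exact (hG.dist_eq_zero_iff.1 huw).symm

lemma snd_eq_of_dist_boxProd_eq_add
    (h : (G □ H).dist u v = (G □ H).dist u w + (G □ H).dist w v) (huv : u.2 = v.2) :
    w.2 = u.2 := by
  rw [dist_boxProd (hG _ _) (hH _ _), dist_boxProd (hG _ _) (hH _ _),
    dist_boxProd (hG _ _) (hH _ _), huv, dist_self] at h
  have : G.dist u.1 v.1 ≤ G.dist u.1 w.1 + G.dist w.1 v.1 := hG.dist_triangle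
  have huw : H.dist v.2 w.2 = 0 := by omega
  rw [huv]
  exact (hH.dist_eq_zero_iff.1 huw).symm

end SimpleGraph

open SimpleGraph

/-- If `Z` is a gated set of the Cartesian (box) product of two connected graphs `G` and `H`,
then `Z` equals the product of its projections. -/
theorem stmt2 {V W : Type*} (G : SimpleGraph V) (H : SimpleGraph W)
    (hG : G.Connected) (hH : H.Connected) (Z : Set (V × W))
    (hZ : Gated (G.boxProd H) Z) :
    Z = {x : V | ∃ y, (x, y) ∈ Z} ×ˢ {y : W | ∃ x, (x, y) ∈ Z} := by
  ext ⟨x, y⟩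
  refine ⟨fun hxy => ⟨⟨y, hxy⟩, ⟨x, hxy⟩⟩, ?_⟩
  rintro ⟨⟨y₀, hxy₀⟩, ⟨x₀, hx₀y⟩⟩
  obtain ⟨g, hgZ, hg⟩ := hZ.2 (x, y)
  have hg₁ : g.1 = x := fst_eq_of_dist_boxProd_eq_add hG hH (hg _ hxy₀) rfl
  have hg₂ : g.2 = y := snd_eq_of_dist_boxProd_eq_add hG hH (hg _ hx₀y) rfl
  obtain rfl : g = (x, y) := Prod.ext hg₁ hg₂
  exact hgZ
end

section
/- Let D be a finite distributive lattice, realized by Birkhoff's theorem as the lattice of down-sets of a finite poset P with elements a₁,...,a_n, and identify D with a sublattice of {0,1}ⁿ via indicator vectors. Then a function f : D → ℝ ∪ {∞} is submodular if and only if its Lovász extension (piecewise-linear interpolation over the standard simplicial subdivision of the order polytope {x ∈ [0,1]ⁿ : x_i ≥ x_j whenever a_i ≺ a_j} into simplices with vertex chains 0 ⊆ e_{i₁} ⊆ e_{i₁}+e_{i₂} ⊆ ⋯ corresponding to maximal chains of D) is convex on the order polytope. -/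
open scoped Classical

/-- `S` is a down-set (lower set) of the poset `(Fin n, prec)`. -/
def IsDownSet {n : ℕ} (prec : Fin n → Fin n → Prop) (S : Finset (Fin n)) : Prop :=
  ∀ i j : Fin n, prec i j → j ∈ S → i ∈ S

/-- Membership in the order polytope `{x ∈ [0,1]ⁿ : a_i ≺ a_j → x_i ≥ x_j}`. -/
def InOrderPolytope {n : ℕ} (prec : Fin n → Fin n → Prop) (x : Fin n → ℝ) : Prop :=
  (∀ i, 0 ≤ x i ∧ x i ≤ 1) ∧ ∀ i j : Fin n, prec i j → x j ≤ x i

/-- The threshold set `{i : x_i > t}` of `x` at level `t`; for `x` in the order polytope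
this is a down-set. -/
noncomputable def threshF {n : ℕ} (x : Fin n → ℝ) (t : ℝ) : Finset (Fin n) :=
  Finset.univ.filter fun i => t < x i

/-- The barycentric weight of the vertex (indicator vector of) `S` in the chain
decomposition of `x`: the measure of the levels `t ∈ (0,1]` with threshold set `S`. -/
noncomputable def weightF {n : ℕ} (x : Fin n → ℝ) (S : Finset (Fin n)) : ℝ :=
  (MeasureTheory.volume {t : ℝ | t ∈ Set.Ioc (0 : ℝ) 1 ∧ threshF x t = S}).toReal

/-- The Lovász extension of `f` over the canonical triangulation of the order polytope:
the piecewise-linear interpolation of the values of `f` along the chain of threshold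
down-sets of `x`. -/
noncomputable def lovaszF {n : ℕ} (f : Finset (Fin n) → EReal) (x : Fin n → ℝ) : EReal :=
  ∑ S : Finset (Fin n), ((weightF x S : ℝ) : EReal) * f S

/-!
Write `z = t • x + (1 - t) • y`. The weight `weightF x S` is the length of the set of levels
`s ∈ (0,1]` with `{x > s} = S`, so `lovaszF f x = ∫₀¹ f {x > s} ds`.

For a real `g` submodular on all sets, Edmonds' greedy vector `v` built along an ordering of the
coordinates by decreasing `z` satisfies `∑ i ∈ S, v i ≤ g S - g ∅` for every `S`, with equality
on the threshold sets of `z`. Hence the extension of `g` is bounded below by the affine function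
`g ∅ + ⟪·, v⟫` and agrees with it at `z`, which gives convexity.

To reduce to that case: down-sets where `f` is finite form a sublattice `L`, by submodularity.
If a vertex of positive weight for `x` or `y` lies outside `L`, the right-hand side is `⊤`.
Otherwise the vertices of `z` lie in `L` too: every threshold set of `z` is a union of sets
`{x ≥ c} ∩ {y ≥ d}`, and a superlevel set `{x ≥ c}` with `c ∈ (0,1]` is a vertex of `x`.
Finally, a real function that is submodular on `L` extends to one that is submodular everywhere.

Conversely, the extension takes the value `f S` at the indicator vector of `S`, and the value
`(f (S ∪ T) + f (S ∩ T)) / 2` at the midpoint of the indicators of `S` and `T`.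
-/

open Finset MeasureTheory Filter Topology
open scoped symmDiff

variable {n : ℕ}

section Weights

def thresholdLevels (x : Fin n → ℝ) (S : Finset (Fin n)) : Set ℝ :=
  {t | t ∈ Set.Ioc (0 : ℝ) 1 ∧ threshF x t = S}

variable {x : Fin n → ℝ}

lemma weightF_eq_volume (x : Fin n → ℝ) (S : Finset (Fin n)) :
    weightF x S = (volume (thresholdLevels x S)).toReal := rfl

lemma weightF_nonneg (x : Fin n → ℝ) (S : Finset (Fin n)) : 0 ≤ weightF x S :=
  ENNReal.toReal_nonneg

lemma measurableSet_thresholdLevels (x : Fin n → ℝ) (S : Finset (Fin n)) :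
    MeasurableSet (thresholdLevels x S) := by
  refine measurableSet_Ioc.inter (?_ : MeasurableSet {t | threshF x t = S})
  have : {t | threshF x t = S} = ⋂ i, {t | t < x i ↔ i ∈ S} := by
    ext t; simp [threshF, Finset.ext_iff]
  rw [this]
  refine MeasurableSet.iInter fun i => ?_
  by_cases h : i ∈ S <;> simp only [h, iff_true, iff_false, not_lt]
  exacts [measurableSet_Iio, measurableSet_Ici]

lemma volume_thresholdLevels_ne_top (x : Fin n → ℝ) (S : Finset (Fin n)) :
    volume (thresholdLevels x S) ≠ ⊤ :=
  ne_top_of_le_ne_top (by simp) (measure_mono fun _ ht => ht.1 : _ ≤ volume (Set.Ioc (0 : ℝ) 1))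

lemma sum_weightF_eq_volume (x : Fin n → ℝ) (𝒮 : Finset (Finset (Fin n))) :
    ∑ S ∈ 𝒮, weightF x S = (volume {t | t ∈ Set.Ioc (0 : ℝ) 1 ∧ threshF x t ∈ 𝒮}).toReal := by
  have hunion : {t | t ∈ Set.Ioc (0 : ℝ) 1 ∧ threshF x t ∈ 𝒮} = ⋃ S ∈ 𝒮, thresholdLevels x S := by
    ext t; simp [thresholdLevels]
  rw [hunion, measure_biUnion_finset, ENNReal.toReal_sum]
  · rfl
  · exact fun S _ => volume_thresholdLevels_ne_top x S
  · exact fun S _ T _ hST => Set.disjoint_left.mpr fun t hS hT => hST (hS.2.symm.trans hT.2)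
  · exact fun S _ => measurableSet_thresholdLevels x S

lemma sum_weightF (x : Fin n → ℝ) : ∑ S, weightF x S = 1 := by
  simp only [sum_weightF_eq_volume, mem_univ, and_true, Set.ofPred_mem_eq, Real.volume_Ioc]
  norm_num

lemma sum_weightF_filter_mem {i : Fin n} (hi : x i ∈ Set.Icc 0 1) :
    ∑ S with i ∈ S, weightF x S = x i := by
  have : {t | t ∈ Set.Ioc (0 : ℝ) 1 ∧ threshF x t ∈ ({S | i ∈ S} : Finset _)} =
      Set.Ioo 0 (x i) := by
    ext t
    simp only [threshF, Set.mem_Ioc, Set.mem_Ioo, mem_filter, mem_univ, true_and]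
    constructor
    · exact fun h => ⟨h.1.1, h.2⟩
    · exact fun h => ⟨⟨h.1, h.2.le.trans hi.2⟩, h.2⟩
  rw [sum_weightF_eq_volume, this, Real.volume_Ioo, sub_zero, ENNReal.toReal_ofReal hi.1]

lemma sum_weightF_mul_sum {v : Fin n → ℝ} (hx : ∀ i, x i ∈ Set.Icc 0 1) :
    ∑ S, weightF x S * ∑ i ∈ S, v i = ∑ i, x i * v i := by
  calc ∑ S, weightF x S * ∑ i ∈ S, v i
      = ∑ S, ∑ i, if i ∈ S then weightF x S * v i else 0 := by
        simp [Finset.mul_sum]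
    _ = ∑ i, ∑ S, if i ∈ S then weightF x S * v i else 0 := Finset.sum_comm
    _ = ∑ i, x i * v i := by
        simp_rw [← Finset.sum_filter, ← Finset.sum_mul, sum_weightF_filter_mem (hx _)]

lemma exists_threshF_eq_of_weightF_pos {S : Finset (Fin n)} (h : 0 < weightF x S) :
    ∃ s ∈ Set.Ioo (0 : ℝ) 1, threshF x s = S := by
  by_contra! hS
  have : thresholdLevels x S ⊆ {1} := fun t ht =>
    le_antisymm ht.1.2 (not_lt.mp fun h1 => hS t ⟨ht.1.1, h1⟩ ht.2)
  rw [weightF_eq_volume, measure_mono_null this (measure_singleton 1)] at h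
  simp at h

lemma weightF_pos_of_forall_mem_Ioo {S : Finset (Fin n)} {a b : ℝ} (hab : a < b) (ha : 0 ≤ a)
    (hb : b ≤ 1) (h : ∀ s ∈ Set.Ioo a b, threshF x s = S) : 0 < weightF x S := by
  have hsub : Set.Ioo a b ⊆ thresholdLevels x S := fun s hs =>
    ⟨⟨ha.trans_lt hs.1, hs.2.le.trans hb⟩, h s hs⟩
  calc 0 < b - a := sub_pos.mpr hab
    _ = (volume (Set.Ioo a b)).toReal := by simp [hab.le]
    _ ≤ weightF x S := ENNReal.toReal_mono (volume_thresholdLevels_ne_top x S) (measure_mono hsub)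

noncomputable def superlevel (x : Fin n → ℝ) (c : ℝ) : Finset (Fin n) :=
  {j | c ≤ x j}

lemma mem_superlevel {c : ℝ} {j : Fin n} : j ∈ superlevel x c ↔ c ≤ x j := by
  simp [superlevel]

lemma superlevel_zero (hx : ∀ i, x i ∈ Set.Icc 0 1) : superlevel x 0 = univ :=
  filter_true_of_mem fun j _ => (hx j).1

lemma threshF_eventually_eq_superlevel (x : Fin n → ℝ) (c : ℝ) :
    ∀ᶠ s in 𝓝[<] c, threshF x s = superlevel x c := by
  have : ∀ j, ∀ᶠ s in 𝓝[<] c, (s < x j ↔ c ≤ x j) := by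
    intro j
    rcases le_or_gt c (x j) with hj | hj
    · filter_upwards [self_mem_nhdsWithin] with s hs using iff_of_true (lt_of_lt_of_le hs hj) hj
    · filter_upwards [nhdsWithin_le_nhds (Ioi_mem_nhds hj)] with s hs
      exact iff_of_false (not_lt.mpr (le_of_lt hs)) (not_le.mpr hj)
  filter_upwards [eventually_all.mpr this] with s hs
  ext j; simp [threshF, superlevel, hs j]

lemma weightF_superlevel_pos {c : ℝ} (hc : c ∈ Set.Ioc 0 1) : 0 < weightF x (superlevel x c) := by
  obtain ⟨l, hl, hsub⟩ :=
    mem_nhdsLT_iff_exists_Ioo_subset.mp (threshF_eventually_eq_superlevel x c)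
  exact weightF_pos_of_forall_mem_Ioo (max_lt hl hc.1) (le_max_right l 0) hc.2
    fun s hs => hsub ⟨(le_max_left l 0).trans_lt hs.1, hs.2⟩

end Weights

section TwoStep

variable {x : Fin n → ℝ} {A B : Finset (Fin n)} {c : ℝ}

lemma weightF_eq_of_threshF_eqOn (hc : c ∈ Set.Icc 0 1)
    (hA : ∀ s ∈ Set.Ioo 0 c, threshF x s = A) (hB : ∀ s ∈ Set.Ioo c 1, threshF x s = B)
    (S : Finset (Fin n)) :
    weightF x S = (if A = S then c else 0) + (if B = S then 1 - c else 0) := by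
  set U : Set ℝ := {s | s ∈ Set.Ioo 0 c ∧ A = S} ∪ {s | s ∈ Set.Ioo c 1 ∧ B = S}
  have hU : U ⊆ thresholdLevels x S := by
    rintro s (⟨hs, rfl⟩ | ⟨hs, rfl⟩)
    · exact ⟨⟨hs.1, hs.2.le.trans hc.2⟩, hA s hs⟩
    · exact ⟨⟨hc.1.trans_lt hs.1, hs.2.le⟩, hB s hs⟩
  have hU' : thresholdLevels x S ⊆ U ∪ {c, 1} := by
    rintro s ⟨⟨hs0, hs1⟩, rfl⟩
    rcases lt_trichotomy s c with hsc | rfl | hsc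
    · exact Or.inl (Or.inl ⟨⟨hs0, hsc⟩, (hA s ⟨hs0, hsc⟩).symm⟩)
    · exact Or.inr (Or.inl rfl)
    · rcases hs1.lt_or_eq with hs1 | rfl
      · exact Or.inl (Or.inr ⟨⟨hsc, hs1⟩, (hB s ⟨hsc, hs1⟩).symm⟩)
      · exact Or.inr (Or.inr rfl)
  have hvol : volume (thresholdLevels x S) = volume U := by
    refine le_antisymm ?_ (measure_mono hU)
    calc volume (thresholdLevels x S) ≤ volume (U ∪ {c, 1}) := measure_mono hU'
      _ ≤ volume U + volume ({c, 1} : Set ℝ) := measure_union_le _ _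
      _ = volume U := by rw [(Set.toFinite ({c, 1} : Set ℝ)).measure_zero, add_zero]
  rw [weightF_eq_volume, hvol, measure_union]
  · by_cases hAS : A = S <;> by_cases hBS : B = S <;>
      simp only [hAS, hBS, and_true, and_false, Set.ofPred_mem_eq, Set.ofPred_false,
        Real.volume_Ioo, measure_empty]
    all_goals simp [ENNReal.toReal_add, hc.1, hc.2]
  · exact Set.disjoint_left.mpr fun s hs hs' => hs.1.2.not_gt hs'.1.1
  · exact measurableSet_Ioo.inter (MeasurableSet.const _)

lemma lovaszF_eq_of_threshF_eqOn (f : Finset (Fin n) → EReal) (hc : c ∈ Set.Icc 0 1)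
    (hA : ∀ s ∈ Set.Ioo 0 c, threshF x s = A) (hB : ∀ s ∈ Set.Ioo c 1, threshF x s = B) :
    lovaszF f x = (c : EReal) * f A + ((1 - c : ℝ) : EReal) * f B := by
  have hc' : (0 : ℝ) ≤ 1 - c := sub_nonneg.mpr hc.2
  simp_rw [lovaszF, weightF_eq_of_threshF_eqOn hc hA hB, EReal.coe_add]
  rw [Finset.sum_congr rfl fun S _ => EReal.right_distrib_of_nonneg
    (EReal.coe_nonneg.mpr (by split_ifs <;> linarith [hc.1]))
    (EReal.coe_nonneg.mpr (by split_ifs <;> linarith))]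
  rw [Finset.sum_add_distrib]
  simp [apply_ite]

end TwoStep

section Greedy

variable {ι β : Type*} [Fintype ι] [DecidableEq ι] [LinearOrder β] {k : ι → β}
  {g : Finset ι → ℝ}

/-- Edmonds' greedy vertex of the base polyhedron of `g`, for the order of `ι` by the key `k`. -/
def greedyVec (g : Finset ι → ℝ) (k : ι → β) (i : ι) : ℝ :=
  g {j | k j ≤ k i} - g {j | k j < k i}

lemma sum_greedyVec_le (hk : Function.Injective k)
    (hg : ∀ A B : Finset ι, g (A ∩ B) + g (A ∪ B) ≤ g A + g B) (S : Finset ι) :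
    ∑ i ∈ S, greedyVec g k i ≤ g S - g ∅ := by
  induction S using Finset.induction_on_max_value k with
  | empty => simp
  | insert a s ha hs ih =>
    have hlt : ∀ j ∈ s, k j < k a := fun j hj =>
      (hs j hj).lt_of_ne (hk.ne (ne_of_mem_of_not_mem hj ha))
    have hinter : insert a s ∩ ({j | k j < k a} : Finset ι) = s := by
      ext j
      simp only [mem_inter, mem_insert, mem_filter, mem_univ, true_and]
      constructor
      · rintro ⟨rfl | hj, hlt'⟩
        exacts [absurd hlt' (lt_irrefl _), hj]
      · exact fun hj => ⟨Or.inr hj, hlt j hj⟩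
    have hunion :
        insert a s ∪ ({j | k j < k a} : Finset ι) = ({j | k j ≤ k a} : Finset ι) := by
      ext j
      simp only [mem_union, mem_insert, mem_filter, mem_univ, true_and]
      constructor
      · rintro ((rfl | hj) | hj)
        exacts [le_rfl, (hlt j hj).le, hj.le]
      · intro hj
        rcases hj.lt_or_eq with hj | hj
        exacts [Or.inr hj, Or.inl (Or.inl (hk hj))]
    have := hg (insert a s) ({j | k j < k a} : Finset ι)
    rw [hinter, hunion] at this
    rw [sum_insert ha, greedyVec]
    linarith

lemma sum_greedyVec_eq (hk : Function.Injective k) {S : Finset ι}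
    (hS : ∀ i ∈ S, ∀ j, k j < k i → j ∈ S) :
    ∑ i ∈ S, greedyVec g k i = g S - g ∅ := by
  induction S using Finset.induction_on_max_value k with
  | empty => simp
  | insert a s ha hs ih =>
    have hs_eq : s = ({j | k j < k a} : Finset ι) := by
      ext j
      simp only [mem_filter, mem_univ, true_and]
      constructor
      · exact fun hj => (hs j hj).lt_of_ne (hk.ne (ne_of_mem_of_not_mem hj ha))
      · intro hj
        exact (mem_insert.mp (hS a (mem_insert_self a s) j hj)).resolve_left
          (fun h => (h ▸ hj).false)
    have hins : insert a s = ({j | k j ≤ k a} : Finset ι) := by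
      ext j
      rw [mem_insert, hs_eq]
      simp only [mem_filter, mem_univ, true_and]
      constructor
      · rintro (rfl | hj)
        exacts [le_rfl, hj.le]
      · intro hj
        rcases hj.lt_or_eq with hj | hj
        exacts [Or.inr hj, Or.inl (hk hj)]
    have hs_closed : ∀ i ∈ s, ∀ j, k j < k i → j ∈ s := by
      rw [hs_eq]
      simp only [mem_filter, mem_univ, true_and]
      exact fun i hi j hj => hj.trans hi
    rw [sum_insert ha, ih hs_closed, greedyVec, ← hins, ← hs_eq]
    ring

end Greedy

section RealLovasz

noncomputable def realLovasz (g : Finset (Fin n) → ℝ) (x : Fin n → ℝ) : ℝ :=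
  ∑ S, weightF x S * g S

variable {g : Finset (Fin n) → ℝ} {x : Fin n → ℝ} {v : Fin n → ℝ}

lemma realLovasz_eq_add_sum (g : Finset (Fin n) → ℝ) (x : Fin n → ℝ) :
    realLovasz g x = g ∅ + ∑ S, weightF x S * (g S - g ∅) := by
  simp [realLovasz, mul_sub, Finset.sum_sub_distrib, ← Finset.sum_mul, sum_weightF]

lemma add_sum_mul_le_realLovasz (hx : ∀ i, x i ∈ Set.Icc 0 1)
    (hv : ∀ S, ∑ i ∈ S, v i ≤ g S - g ∅) :
    g ∅ + ∑ i, x i * v i ≤ realLovasz g x := by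
  rw [realLovasz_eq_add_sum, ← sum_weightF_mul_sum hx]
  exact add_le_add le_rfl
    (Finset.sum_le_sum fun S _ => mul_le_mul_of_nonneg_left (hv S) (weightF_nonneg x S))

lemma realLovasz_eq_add_sum_mul (hx : ∀ i, x i ∈ Set.Icc 0 1)
    (hv : ∀ s, ∑ i ∈ threshF x s, v i = g (threshF x s) - g ∅) :
    realLovasz g x = g ∅ + ∑ i, x i * v i := by
  rw [realLovasz_eq_add_sum, ← sum_weightF_mul_sum hx]
  congr 1
  refine Finset.sum_congr rfl fun S _ => ?_
  rcases (weightF_nonneg x S).eq_or_lt with h | h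
  · simp [← h]
  · obtain ⟨s, -, rfl⟩ := exists_threshF_eq_of_weightF_pos h
    rw [hv]

theorem realLovasz_convexComb_le (hg : ∀ A B, g (A ∩ B) + g (A ∪ B) ≤ g A + g B)
    {x y : Fin n → ℝ} (hx : ∀ i, x i ∈ Set.Icc 0 1) (hy : ∀ i, y i ∈ Set.Icc 0 1)
    {t : ℝ} (ht0 : 0 ≤ t) (ht1 : t ≤ 1) :
    realLovasz g (fun i => t * x i + (1 - t) * y i) ≤
      t * realLovasz g x + (1 - t) * realLovasz g y := by
  set z : Fin n → ℝ := fun i => t * x i + (1 - t) * y i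
  have hz : ∀ i, z i ∈ Set.Icc 0 1 := fun i => by
    obtain ⟨hx0, hx1⟩ := hx i
    obtain ⟨hy0, hy1⟩ := hy i
    constructor <;> nlinarith
  -- order by decreasing `z`, ties broken by index, so that threshold sets of `z` are initial
  -- segments
  set k : Fin n → ℝ ×ₗ Fin n := fun i => toLex (-z i, i)
  have hk : Function.Injective k := fun i j h => (Prod.ext_iff.mp (toLex.injective h)).2
  set v := greedyVec g k
  have hv : ∀ S, ∑ i ∈ S, v i ≤ g S - g ∅ := sum_greedyVec_le hk hg
  have hzv : realLovasz g z = g ∅ + ∑ i, z i * v i := by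
    refine realLovasz_eq_add_sum_mul hz fun s => sum_greedyVec_eq hk fun i hi j hj => ?_
    have : -z j ≤ -z i := Prod.Lex.monotone_fst (k j) (k i) hj.le
    simp only [threshF, mem_filter, mem_univ, true_and] at hi ⊢
    linarith
  calc realLovasz g z = g ∅ + ∑ i, z i * v i := hzv
    _ = t * (g ∅ + ∑ i, x i * v i) + (1 - t) * (g ∅ + ∑ i, y i * v i) := by
        simp only [z, add_mul, Finset.sum_add_distrib, mul_assoc, ← Finset.mul_sum]
        ring
    _ ≤ t * realLovasz g x + (1 - t) * realLovasz g y := by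
        have := add_sum_mul_le_realLovasz hx hv
        have := add_sum_mul_le_realLovasz hy hv
        gcongr

end RealLovasz

section Extension

variable {α : Type*} [DecidableEq α]

lemma card_symmDiff_inter_add_card_symmDiff_union (A B C D : Finset α) :
    #((A ∩ B) ∆ (C ∩ D)) + #((A ∪ B) ∆ (C ∪ D)) ≤ #(A ∆ C) + #(B ∆ D) := by
  rw [← card_union_add_card_inter, ← card_union_add_card_inter (A ∆ C)]
  refine add_le_add (card_le_card ?_) (card_le_card ?_) <;> intro i <;>
    simp only [mem_union, mem_inter, mem_symmDiff] <;> tauto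

/-- The extension is the inf-convolution `S ↦ min_{T ∈ L} (f T + M * #(S ∆ T))` with `M` large;
it is submodular because the Hamming distance is submodular on pairs of sets. -/
theorem exists_submodular_extension [Fintype α] (L : Sublattice (Finset α)) (f : Finset α → ℝ)
    (hf : ∀ S ∈ L, ∀ T ∈ L, f (S ∩ T) + f (S ∪ T) ≤ f S + f T) :
    ∃ g : Finset α → ℝ,
      (∀ A B, g (A ∩ B) + g (A ∪ B) ≤ g A + g B) ∧ ∀ S ∈ L, g S = f S := by
  set Lfin : Finset (Finset α) := {S | S ∈ L}
  have hmem : ∀ S, S ∈ Lfin ↔ S ∈ L := by simp [Lfin]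
  rcases Lfin.eq_empty_or_nonempty with hL | hL
  · exact ⟨0, fun _ _ => by simp, fun S hS => absurd ((hmem S).mpr hS)
      (Finset.eq_empty_iff_forall_notMem.mp hL S)⟩
  set M : ℝ := 2 * ∑ T ∈ Lfin, |f T|
  have hM : 0 ≤ M := by positivity
  have hfM : ∀ S ∈ Lfin, ∀ T ∈ Lfin, f S ≤ f T + M := fun S hS T hT => by
    have := single_le_sum (fun U _ => abs_nonneg (f U)) hS
    have := single_le_sum (fun U _ => abs_nonneg (f U)) hT
    linarith [le_abs_self (f S), neg_abs_le (f T)]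
  set g : Finset α → ℝ := fun S => Lfin.inf' hL fun T => f T + M * #(S ∆ T)
  refine ⟨g, fun A B => ?_, fun S hS => le_antisymm ?_ ?_⟩
  · obtain ⟨T₁, hT₁, hA⟩ := exists_mem_eq_inf' hL fun T => f T + M * #(A ∆ T)
    obtain ⟨T₂, hT₂, hB⟩ := exists_mem_eq_inf' hL fun T => f T + M * #(B ∆ T)
    have hT₁' := (hmem T₁).mp hT₁
    have hT₂' := (hmem T₂).mp hT₂
    have hinter : g (A ∩ B) ≤ f (T₁ ∩ T₂) + M * #((A ∩ B) ∆ (T₁ ∩ T₂)) :=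
      inf'_le _ ((hmem _).mpr (L.inf_mem hT₁' hT₂'))
    have hunion : g (A ∪ B) ≤ f (T₁ ∪ T₂) + M * #((A ∪ B) ∆ (T₁ ∪ T₂)) :=
      inf'_le _ ((hmem _).mpr (L.sup_mem hT₁' hT₂'))
    have hcard : (#((A ∩ B) ∆ (T₁ ∩ T₂)) + #((A ∪ B) ∆ (T₁ ∪ T₂)) : ℝ) ≤
        #(A ∆ T₁) + #(B ∆ T₂) := by
      exact_mod_cast card_symmDiff_inter_add_card_symmDiff_union A B T₁ T₂
    have := mul_le_mul_of_nonneg_left hcard hM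
    simp only [g, hA, hB]
    linarith [hf T₁ hT₁' T₂ hT₂']
  · simpa using inf'_le (fun T => f T + M * #(S ∆ T)) ((hmem S).mpr hS)
  · refine le_inf' _ _ fun T hT => ?_
    rcases eq_or_ne S T with rfl | hST
    · simp
    · have : (1 : ℝ) ≤ #(S ∆ T) := by
        exact_mod_cast card_pos.mpr (symmDiff_nonempty.mpr hST)
      nlinarith [hfM S ((hmem S).mpr hS) T hT]

end Extension

section DownSets

variable {prec : Fin n → Fin n → Prop} {S T : Finset (Fin n)}

lemma IsDownSet.inter (hS : IsDownSet prec S) (hT : IsDownSet prec T) :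
    IsDownSet prec (S ∩ T) := fun i j hij hj =>
  mem_inter.mpr ⟨hS i j hij (mem_inter.mp hj).1, hT i j hij (mem_inter.mp hj).2⟩

lemma IsDownSet.union (hS : IsDownSet prec S) (hT : IsDownSet prec T) :
    IsDownSet prec (S ∪ T) := fun i j hij hj =>
  (mem_union.mp hj).elim (fun h => mem_union_left _ (hS i j hij h))
    (fun h => mem_union_right _ (hT i j hij h))

lemma isDownSet_threshF {x : Fin n → ℝ} (hx : ∀ i j, prec i j → x j ≤ x i) (t : ℝ) :
    IsDownSet prec (threshF x t) := fun i j hij hj => by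
  simp only [threshF, mem_filter, mem_univ, true_and] at hj ⊢
  exact hj.trans_le (hx i j hij)

lemma inOrderPolytope_indicator (hS : IsDownSet prec S) :
    InOrderPolytope prec fun i => if i ∈ S then 1 else 0 := by
  refine ⟨fun i => by dsimp only; split_ifs <;> norm_num, fun i j hij => ?_⟩
  by_cases hj : j ∈ S
  · simp [hj, hS i j hij hj]
  · by_cases hi : i ∈ S <;> simp [hi, hj]

/-- The effective domain of `f` on the down-sets; submodularity makes it a sublattice. -/
def domSublattice (prec : Fin n → Fin n → Prop) (f : Finset (Fin n) → EReal)
    (hf : ∀ S, f S ≠ ⊥)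
    (hsub : ∀ S T, IsDownSet prec S → IsDownSet prec T → f (S ∩ T) + f (S ∪ T) ≤ f S + f T) :
    Sublattice (Finset (Fin n)) where
  carrier := {S | IsDownSet prec S ∧ f S ≠ ⊤}
  supClosed' S hS T hT := ⟨hS.1.union hT.1,
    ((EReal.add_ne_top_iff_ne_top₂ (hf _) (hf _)).mp (ne_top_of_le_ne_top
      (EReal.add_ne_top hS.2 hT.2) (hsub S T hS.1 hT.1))).2⟩
  infClosed' S hS T hT := ⟨hS.1.inter hT.1,
    ((EReal.add_ne_top_iff_ne_top₂ (hf _) (hf _)).mp (ne_top_of_le_ne_top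
      (EReal.add_ne_top hS.2 hT.2) (hsub S T hS.1 hT.1))).1⟩

end DownSets

/-- The vertices of the smallest simplex of the canonical triangulation containing `x`. -/
def lovaszSupport (x : Fin n → ℝ) : Set (Finset (Fin n)) :=
  {S | 0 < weightF x S}

section Support

variable {x y : Fin n → ℝ}

lemma isDownSet_of_mem_lovaszSupport {prec : Fin n → Fin n → Prop}
    (hx : InOrderPolytope prec x) {S : Finset (Fin n)} (hS : S ∈ lovaszSupport x) :
    IsDownSet prec S := by
  obtain ⟨s, -, rfl⟩ := exists_threshF_eq_of_weightF_pos hS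
  exact isDownSet_threshF hx.2 s

variable {L : Sublattice (Finset (Fin n))}

lemma superlevel_inter_superlevel_mem (hx : ∀ i, x i ∈ Set.Icc 0 1) (hy : ∀ i, y i ∈ Set.Icc 0 1)
    (hxL : lovaszSupport x ⊆ L) (hyL : lovaszSupport y ⊆ L) {c d : ℝ} (hc : c ∈ Set.Icc 0 1)
    (hd : d ∈ Set.Icc 0 1) (hcd : 0 < c ∨ 0 < d) :
    superlevel x c ∩ superlevel y d ∈ L := by
  have hX : 0 < c → superlevel x c ∈ L := fun hc0 => hxL (weightF_superlevel_pos ⟨hc0, hc.2⟩)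
  have hY : 0 < d → superlevel y d ∈ L := fun hd0 => hyL (weightF_superlevel_pos ⟨hd0, hd.2⟩)
  rcases hc.1.eq_or_lt with rfl | hc0
  · rw [superlevel_zero hx, univ_inter]
    exact hY (hcd.resolve_left (lt_irrefl 0))
  rcases hd.1.eq_or_lt with rfl | hd0
  · rw [superlevel_zero hy, inter_univ]
    exact hX hc0
  exact L.inf_mem (hX hc0) (hY hd0)

/-- The threshold set `{z > s}` is the union over its members `i` of `{x ≥ x i} ∩ {y ≥ y i}`,
or `{x ≥ 1} ∩ {y ≥ 1}` when it is empty. -/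
theorem lovaszSupport_convexComb_subset (hx : ∀ i, x i ∈ Set.Icc 0 1)
    (hy : ∀ i, y i ∈ Set.Icc 0 1) (hxL : lovaszSupport x ⊆ L) (hyL : lovaszSupport y ⊆ L)
    {t : ℝ} (ht0 : 0 ≤ t) (ht1 : t ≤ 1) :
    lovaszSupport (fun i => t * x i + (1 - t) * y i) ⊆ L := by
  set z : Fin n → ℝ := fun i => t * x i + (1 - t) * y i
  intro S hS
  obtain ⟨s, hs, rfl⟩ := exists_threshF_eq_of_weightF_pos hS
  have hmem : ∀ j, j ∈ threshF z s ↔ s < z j := by simp [threshF]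
  rcases (threshF z s).eq_empty_or_nonempty with hempty | hne
  · have : superlevel x 1 ∩ superlevel y 1 = ∅ := by
      refine eq_empty_iff_forall_notMem.mpr fun j hj => ?_
      simp only [mem_inter, mem_superlevel] at hj
      have : 1 ≤ z j := by simp only [z]; nlinarith
      exact (eq_empty_iff_forall_notMem.mp hempty j) ((hmem j).mpr (hs.2.trans_le this))
    rw [hempty, ← this]
    exact superlevel_inter_superlevel_mem hx hy hxL hyL ⟨zero_le_one, le_rfl⟩ ⟨zero_le_one, le_rfl⟩
      (Or.inl one_pos)
  · have hunion : threshF z s =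
        (threshF z s).sup' hne fun i => superlevel x (x i) ∩ superlevel y (y i) := by
      refine le_antisymm (fun j hj => (mem_sup' hne).mpr ⟨j, hj, by simp [mem_superlevel]⟩)
        (sup'_le _ _ fun i hi j hj => ?_)
      simp only [mem_inter, mem_superlevel] at hj
      have : z i ≤ z j := by simp only [z]; gcongr; exacts [hj.1, hj.2]
      exact (hmem j).mpr (((hmem i).mp hi).trans_le this)
    rw [hunion]
    refine L.supClosed.finsetSup'_mem hne fun i hi => ?_
    refine superlevel_inter_superlevel_mem hx hy hxL hyL (hx i) (hy i) ?_
    by_contra! h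
    have : z i ≤ 0 := by simp only [z]; nlinarith [(hx i).1, (hy i).1]
    exact (hs.1.trans ((hmem i).mp hi)).not_ge this

end Support

section ERealArith

lemma EReal.coe_finset_sum {ι : Type*} (s : Finset ι) (a : ι → ℝ) :
    ((∑ i ∈ s, a i : ℝ) : EReal) = ∑ i ∈ s, (a i : EReal) :=
  map_sum (⟨⟨((↑) : ℝ → EReal), EReal.coe_zero⟩, EReal.coe_add⟩ : ℝ →+ EReal) a s

lemma EReal.sum_ne_bot {ι : Type*} {s : Finset ι} {a : ι → EReal} (h : ∀ i ∈ s, a i ≠ ⊥) :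
    ∑ i ∈ s, a i ≠ ⊥ :=
  Finset.sum_induction a (· ≠ ⊥) (fun _ _ ha hb => EReal.add_ne_bot_iff.mpr ⟨ha, hb⟩)
    EReal.zero_ne_bot h

lemma EReal.coe_mul_ne_bot {r : ℝ} (hr : 0 ≤ r) {a : EReal} (ha : a ≠ ⊥) : (r : EReal) * a ≠ ⊥ :=
  (EReal.mul_ne_bot _ _).mpr ⟨Or.inl (EReal.coe_ne_bot r), Or.inr ha, Or.inl (EReal.coe_ne_top r),
    Or.inl (EReal.coe_nonneg.mpr hr)⟩

lemma EReal.add_le_add_of_coe_mul_le {r : ℝ} (hr : 0 < r) {a b c d : EReal}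
    (h : (r : EReal) * a + r * b ≤ r * c + r * d) : a + b ≤ c + d := by
  have hcancel : ∀ e : EReal, ((r⁻¹ : ℝ) : EReal) * (r * e) = e := fun e => by
    rw [← mul_assoc, ← EReal.coe_mul, inv_mul_cancel₀ hr.ne', EReal.coe_one, one_mul]
  have hr' : (0 : EReal) ≤ r := EReal.coe_nonneg.mpr hr.le
  have := mul_le_mul_of_nonneg_left h (EReal.coe_nonneg.mpr (inv_nonneg.mpr hr.le))
  rwa [← EReal.left_distrib_of_nonneg_of_ne_top hr' (EReal.coe_ne_top r),
    ← EReal.left_distrib_of_nonneg_of_ne_top hr' (EReal.coe_ne_top r), hcancel, hcancel] at this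

end ERealArith

section LovaszF

variable {f : Finset (Fin n) → EReal} {x : Fin n → ℝ}

lemma lovaszF_ne_bot (hf : ∀ S, f S ≠ ⊥) (x : Fin n → ℝ) : lovaszF f x ≠ ⊥ :=
  EReal.sum_ne_bot fun S _ => EReal.coe_mul_ne_bot (weightF_nonneg x S) (hf S)

lemma lovaszF_eq_top (hf : ∀ S, f S ≠ ⊥) {S : Finset (Fin n)} (hS : S ∈ lovaszSupport x)
    (hfS : f S = ⊤) : lovaszF f x = ⊤ := by
  rw [lovaszF, ← add_sum_erase _ _ (mem_univ S), hfS, EReal.coe_mul_top_of_pos hS,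
    EReal.top_add_of_ne_bot]
  exact EReal.sum_ne_bot fun T _ => EReal.coe_mul_ne_bot (weightF_nonneg x T) (hf T)

lemma lovaszF_eq_coe_realLovasz {g : Finset (Fin n) → ℝ}
    (h : ∀ S ∈ lovaszSupport x, f S = g S) : lovaszF f x = realLovasz g x := by
  rw [lovaszF, realLovasz, EReal.coe_finset_sum]
  refine Finset.sum_congr rfl fun S _ => ?_
  rcases (weightF_nonneg x S).eq_or_lt with hS | hS
  · simp [← hS]
  · rw [EReal.coe_mul, h S hS]

lemma lovaszF_indicator (f : Finset (Fin n) → EReal) (S : Finset (Fin n)) :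
    lovaszF f (fun i => if i ∈ S then 1 else 0) = f S := by
  have hS : ∀ s ∈ Set.Ioo (0 : ℝ) 1, threshF (fun i => if i ∈ S then 1 else 0) s = S :=
    fun s hs => by ext i; by_cases hi : i ∈ S <;> simp [threshF, hi, hs.2, hs.1.le]
  rw [lovaszF_eq_of_threshF_eqOn (c := 1) (B := S) f ⟨zero_le_one, le_rfl⟩ hS
    (fun s hs => (hs.1.not_gt hs.2).elim)]
  simp

lemma lovaszF_midpoint_indicator (f : Finset (Fin n) → EReal) (S T : Finset (Fin n)) :
    lovaszF f (fun i => 1 / 2 * (if i ∈ S then 1 else 0) + (1 - 1 / 2) * (if i ∈ T then 1 else 0))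
      = ((1 / 2 : ℝ) : EReal) * f (S ∪ T) + ((1 - 1 / 2 : ℝ) : EReal) * f (S ∩ T) := by
  refine lovaszF_eq_of_threshF_eqOn f ⟨by norm_num, by norm_num⟩ (fun s hs => ?_) (fun s hs => ?_)
  all_goals
    obtain ⟨hs0, hs1⟩ := hs
    ext i
    by_cases hiS : i ∈ S <;> by_cases hiT : i ∈ T <;> simp [threshF, hiS, hiT] <;> linarith

end LovaszF

section Domain

variable {prec : Fin n → Fin n → Prop} {f : Finset (Fin n) → EReal} (hf : ∀ S, f S ≠ ⊥)
  (hsub : ∀ S T, IsDownSet prec S → IsDownSet prec T → f (S ∩ T) + f (S ∪ T) ≤ f S + f T)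

lemma exists_submodular_coe_eq_on_domSublattice :
    ∃ g : Finset (Fin n) → ℝ, (∀ A B, g (A ∩ B) + g (A ∪ B) ≤ g A + g B) ∧
      ∀ S ∈ domSublattice prec f hf hsub, (g S : EReal) = f S := by
  set L := domSublattice prec f hf hsub
  have hfS : ∀ U ∈ L, ((f U).toReal : EReal) = f U := fun U hU => EReal.coe_toReal hU.2 (hf U)
  obtain ⟨g, hg, hgf⟩ := exists_submodular_extension L (fun S => (f S).toReal) fun S hS T hT => by
    rw [← EReal.coe_le_coe_iff, EReal.coe_add, EReal.coe_add, hfS S hS, hfS T hT,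
      hfS (S ∩ T) (L.inf_mem hS hT), hfS (S ∪ T) (L.sup_mem hS hT)]
    exact hsub S T hS.1 hT.1
  exact ⟨g, hg, fun S hS => by rw [hgf S hS, hfS S hS]⟩

lemma lovaszSupport_subset_domSublattice_or_lovaszF_eq_top {x : Fin n → ℝ}
    (hx : InOrderPolytope prec x) :
    lovaszSupport x ⊆ domSublattice prec f hf hsub ∨ lovaszF f x = ⊤ := by
  refine or_iff_not_imp_left.mpr fun hL => ?_
  obtain ⟨S, hS, hSL⟩ := Set.not_subset.mp hL
  exact lovaszF_eq_top hf hS (not_ne_iff.mp fun h => hSL ⟨isDownSet_of_mem_lovaszSupport hx hS, h⟩)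

end Domain

theorem lovaszF_convexComb_le_of_submodular {prec : Fin n → Fin n → Prop}
    {f : Finset (Fin n) → EReal} (hf : ∀ S, f S ≠ ⊥)
    (hsub : ∀ S T, IsDownSet prec S → IsDownSet prec T → f (S ∩ T) + f (S ∪ T) ≤ f S + f T)
    {x y : Fin n → ℝ} (hx : InOrderPolytope prec x) (hy : InOrderPolytope prec y)
    {t : ℝ} (ht0 : 0 ≤ t) (ht1 : t ≤ 1) :
    lovaszF f (fun i => t * x i + (1 - t) * y i) ≤
      (t : EReal) * lovaszF f x + ((1 - t : ℝ) : EReal) * lovaszF f y := by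
  rcases ht0.eq_or_lt with rfl | ht0
  · simp
  rcases ht1.eq_or_lt with rfl | ht1
  · simp
  rcases lovaszSupport_subset_domSublattice_or_lovaszF_eq_top hf hsub hx with hxL | hxtop
  swap
  · rw [hxtop, EReal.coe_mul_top_of_pos ht0,
      EReal.top_add_of_ne_bot (EReal.coe_mul_ne_bot (by linarith) (lovaszF_ne_bot hf y))]
    exact le_top
  rcases lovaszSupport_subset_domSublattice_or_lovaszF_eq_top hf hsub hy with hyL | hytop
  swap
  · rw [hytop, EReal.coe_mul_top_of_pos (by linarith),
      EReal.add_top_of_ne_bot (EReal.coe_mul_ne_bot ht0.le (lovaszF_ne_bot hf x))]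
    exact le_top
  obtain ⟨g, hg, hgf⟩ := exists_submodular_coe_eq_on_domSublattice hf hsub
  have hfg : ∀ u, lovaszSupport u ⊆ domSublattice prec f hf hsub →
      lovaszF f u = realLovasz g u := fun u hu =>
    lovaszF_eq_coe_realLovasz fun S hS => (hgf S (hu hS)).symm
  rw [hfg _ (lovaszSupport_convexComb_subset hx.1 hy.1 hxL hyL ht0.le ht1.le), hfg x hxL,
    hfg y hyL]
  exact_mod_cast realLovasz_convexComb_le hg hx.1 hy.1 ht0.le ht1.le

theorem submodular_of_lovaszF_convexComb_le {prec : Fin n → Fin n → Prop}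
    {f : Finset (Fin n) → EReal}
    (hconv : ∀ x y : Fin n → ℝ, InOrderPolytope prec x → InOrderPolytope prec y →
      ∀ t : ℝ, 0 ≤ t → t ≤ 1 →
        lovaszF f (fun i => t * x i + (1 - t) * y i) ≤
          ((t : ℝ) : EReal) * lovaszF f x + (((1 - t : ℝ)) : EReal) * lovaszF f y)
    {S T : Finset (Fin n)} (hS : IsDownSet prec S) (hT : IsDownSet prec T) :
    f (S ∩ T) + f (S ∪ T) ≤ f S + f T := by
  have := hconv _ _ (inOrderPolytope_indicator hS) (inOrderPolytope_indicator hT) (1 / 2)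
    (by norm_num) (by norm_num)
  rw [lovaszF_midpoint_indicator, lovaszF_indicator, lovaszF_indicator,
    show (1 - 1 / 2 : ℝ) = 1 / 2 by norm_num] at this
  rw [add_comm (f (S ∩ T))]
  exact EReal.add_le_add_of_coe_mul_le (by norm_num) this

theorem stmt10_general {n : ℕ} (prec : Fin n → Fin n → Prop)
    (f : Finset (Fin n) → EReal) (hf : ∀ S, f S ≠ ⊥) :
    (∀ S T : Finset (Fin n), IsDownSet prec S → IsDownSet prec T →
      f (S ∩ T) + f (S ∪ T) ≤ f S + f T) ↔
    (∀ x y : Fin n → ℝ, InOrderPolytope prec x → InOrderPolytope prec y →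
      ∀ t : ℝ, 0 ≤ t → t ≤ 1 →
        lovaszF f (fun i => t * x i + (1 - t) * y i) ≤
          ((t : ℝ) : EReal) * lovaszF f x + (((1 - t : ℝ)) : EReal) * lovaszF f y) :=
  ⟨fun hsub _ _ hx hy _ ht0 ht1 => lovaszF_convexComb_le_of_submodular hf hsub hx hy ht0 ht1,
    fun hconv _ _ hS hT => submodular_of_lovaszF_convexComb_le hconv hS hT⟩

/-- Let `D` be the distributive lattice of down-sets of the finite poset `(Fin n, prec)`,
identified with indicator vectors in `{0,1}ⁿ`. A function `f : D → ℝ ∪ {∞}` is submodular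
iff its Lovász extension is convex on the order polytope. -/
theorem stmt10 {n : ℕ} (prec : Fin n → Fin n → Prop) (hprec : Transitive prec)
    (f : Finset (Fin n) → EReal) (hf : ∀ S, f S ≠ ⊥) :
    (∀ S T : Finset (Fin n), IsDownSet prec S → IsDownSet prec T →
      f (S ∩ T) + f (S ∪ T) ≤ f S + f T) ↔
    (∀ x y : Fin n → ℝ, InOrderPolytope prec x → InOrderPolytope prec y →
      ∀ t : ℝ, 0 ≤ t → t ≤ 1 →
        lovaszF f (fun i => t * x i + (1 - t) * y i) ≤
          ((t : ℝ) : EReal) * lovaszF f x + (((1 - t : ℝ)) : EReal) * lovaszF f y) :=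
  stmt10_general prec f hf
end

section
/- Let g : ℤⁿ → ℝ ∪ {∞} be an L♮-convex function, i.e., g satisfies g(x) + g(y) ≥ g(⌊(x+y)/2⌋) + g(⌈(x+y)/2⌉) for all x, y ∈ ℤⁿ. If x ∈ dom g is not a minimizer of g, then there exists z ∈ ℤⁿ with ‖z − x‖_∞ ≤ 1 and either z ≥ x or z ≤ x (componentwise), such that g(z) < g(x). -/
private lemma key_lt {α : Type*} {g : α → EReal} (hg : ∀ x, g x ≠ ⊥)
    {x w m1 m2 : α} (hx : g x ≠ ⊤) (hw : g w < g x)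
    (h : g m1 + g m2 ≤ g x + g w) : g m1 < g x ∨ g m2 < g x := by
  by_contra hc
  push_neg at hc
  have h1 : g x + g x ≤ g m1 + g m2 := add_le_add hc.1 hc.2
  have hwt : g w ≠ ⊤ := ne_top_of_lt hw
  lift g x to ℝ using ⟨hx, hg x⟩ with a
  lift g w to ℝ using ⟨hwt, hg w⟩ with b
  have h2 : ((a : EReal) + a) ≤ (a : EReal) + b := le_trans h1 h
  rw [← EReal.coe_add, ← EReal.coe_add, EReal.coe_le_coe_iff] at h2
  have : (b : EReal) < a := hw
  rw [EReal.coe_lt_coe_iff] at this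
  linarith

/-- L♮-convex local optimality criterion on `ℤⁿ`: if `g` satisfies discrete midpoint
convexity `g(x) + g(y) ≥ g(⌊(x+y)/2⌋) + g(⌈(x+y)/2⌉)` and `x ∈ dom g` is not a global
minimizer, then some `z` with `‖z − x‖_∞ ≤ 1` and `z ≥ x` or `z ≤ x` satisfies
`g(z) < g(x)`. -/
theorem stmt12 {n : ℕ} (g : (Fin n → ℤ) → EReal) (hg : ∀ x, g x ≠ ⊥)
    (hmc : ∀ x y : Fin n → ℤ,
      g x + g y ≥ g (fun i => Int.fdiv (x i + y i) 2) + g (fun i => Int.fdiv (x i + y i + 1) 2))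
    (x : Fin n → ℤ) (hx : g x ≠ ⊤) (hnotmin : ∃ w : Fin n → ℤ, g w < g x) :
    ∃ z : Fin n → ℤ, (∀ i, |z i - x i| ≤ 1) ∧
      ((∀ i, x i ≤ z i) ∨ (∀ i, z i ≤ x i)) ∧ g z < g x := by
  obtain ⟨w, hw⟩ := hnotmin
  suffices H : ∀ d : ℕ, ∀ w : Fin n → ℤ, (∀ i, (w i - x i).natAbs ≤ d) → g w < g x →
      ∃ z : Fin n → ℤ, (∀ i, |z i - x i| ≤ 1) ∧
        ((∀ i, x i ≤ z i) ∨ (∀ i, z i ≤ x i)) ∧ g z < g x by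
    exact H (Finset.univ.sup fun i => (w i - x i).natAbs) w
      (fun i => Finset.le_sup (f := fun i => (w i - x i).natAbs) (Finset.mem_univ i)) hw
  intro d
  induction d using Nat.strong_induction_on with
  | _ d IH =>
    intro w hwd hw
    set m1 : Fin n → ℤ := fun i => Int.fdiv (x i + w i) 2 with hm1
    set m2 : Fin n → ℤ := fun i => Int.fdiv (x i + w i + 1) 2 with hm2
    have hm1e : ∀ i, m1 i = (x i + w i) / 2 := fun i => Int.fdiv_eq_ediv_of_nonneg _ (by norm_num)
    have hm2e : ∀ i, m2 i = (x i + w i + 1) / 2 := fun i => Int.fdiv_eq_ediv_of_nonneg _ (by norm_num)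
    have hkey := key_lt hg hx hw (hmc x w)
    by_cases hd : d ≤ 1
    · -- all coordinates differ by at most 1; midpoints are min and max
      rcases hkey with hk | hk
      · refine ⟨m1, fun i => ?_, Or.inr fun i => ?_, hk⟩
        · have := hwd i; rw [hm1e i, abs_le]; omega
        · have := hwd i; rw [hm1e i]; omega
      · refine ⟨m2, fun i => ?_, Or.inl fun i => ?_, hk⟩
        · have := hwd i; rw [hm2e i, abs_le]; omega
        · have := hwd i; rw [hm2e i]; omega
    · -- recurse with a strictly closer point
      push_neg at hd
      rcases hkey with hk | hk
      · exact IH (d - 1) (by omega) m1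
          (fun i => by have := hwd i; rw [hm1e i]; omega) hk
      · exact IH (d - 1) (by omega) m2
          (fun i => by have := hwd i; rw [hm2e i]; omega) hk
end

section
/- Let L be a modular lattice and let g : L → ℝ ∪ {∞} be submodular. Define g* on the interval poset of L by g*([p,q]) = (g(p) + g(q))/2. Then for any two intervals [p,q], [p',q'], it holds that g*([p,q] ∧ [p',q']) + g*([(p∨p')∧(q∧q'), (p∨p')∨(q∧q')]) ≤ g*([p,q]) + g*([p',q']), where [p,q] ∧ [p',q'] = [p∧p', q∨q']. -/
theorem add_add_add_le_of_submodular {L M : Type*} [Lattice L] [AddCommMonoid M] [PartialOrder M]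
    [IsOrderedAddMonoid M] {g : L → M} (hsub : ∀ x y : L, g (x ⊓ y) + g (x ⊔ y) ≤ g x + g y)
    (p q p' q' : L) :
    g (p ⊓ p') + g (q ⊔ q') + (g ((p ⊔ p') ⊓ (q ⊓ q')) + g ((p ⊔ p') ⊔ (q ⊓ q'))) ≤
      g p + g q + (g p' + g q') :=
  calc g (p ⊓ p') + g (q ⊔ q') + (g ((p ⊔ p') ⊓ (q ⊓ q')) + g ((p ⊔ p') ⊔ (q ⊓ q')))
      ≤ g (p ⊓ p') + g (q ⊔ q') + (g (p ⊔ p') + g (q ⊓ q')) := add_le_add_right (hsub _ _) _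
    _ = g (p ⊓ p') + g (p ⊔ p') + (g (q ⊓ q') + g (q ⊔ q')) := by abel
    _ ≤ g p + g p' + (g q + g q') := add_le_add (hsub p p') (hsub q q')
    _ = g p + g q + (g p' + g q') := by abel

theorem stmt17_general {L : Type*} [Lattice L]
    (g : L → EReal)
    (hsub : ∀ x y : L, g (x ⊓ y) + g (x ⊔ y) ≤ g x + g y)
    (p q p' q' : L) :
    ((1 / 2 : ℝ) : EReal) * (g (p ⊓ p') + g (q ⊔ q')) +
      ((1 / 2 : ℝ) : EReal) * (g ((p ⊔ p') ⊓ (q ⊓ q')) + g ((p ⊔ p') ⊔ (q ⊓ q'))) ≤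
    ((1 / 2 : ℝ) : EReal) * (g p + g q) + ((1 / 2 : ℝ) : EReal) * (g p' + g q') := by
  have half_nonneg : (0 : EReal) ≤ ((1 / 2 : ℝ) : EReal) := by exact_mod_cast (by norm_num)
  have half_ne_top : ((1 / 2 : ℝ) : EReal) ≠ ⊤ := EReal.coe_ne_top _
  simp only [← EReal.left_distrib_of_nonneg_of_ne_top half_nonneg half_ne_top]
  exact mul_le_mul_of_nonneg_left (add_add_add_le_of_submodular hsub p q p' q') half_nonneg

/-- Let `g` be a submodular function on a modular lattice `L` and define
`g*([p,q]) = (g(p)+g(q))/2` on intervals. Then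
`g*([p,q] ∧ [p',q']) + g*([(p∨p')∧(q∧q'), (p∨p')∨(q∧q')]) ≤ g*([p,q]) + g*([p',q'])`,
where `[p,q] ∧ [p',q'] = [p∧p', q∨q']`. -/
theorem stmt17 {L : Type*} [Lattice L] [IsModularLattice L]
    (g : L → EReal) (hb : ∀ x : L, g x ≠ ⊥)
    (hsub : ∀ x y : L, g (x ⊓ y) + g (x ⊔ y) ≤ g x + g y)
    (p q p' q' : L) (h : p ≤ q) (h' : p' ≤ q') :
    ((1 / 2 : ℝ) : EReal) * (g (p ⊓ p') + g (q ⊔ q')) +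
      ((1 / 2 : ℝ) : EReal) * (g ((p ⊔ p') ⊓ (q ⊓ q')) + g ((p ⊔ p') ⊔ (q ⊓ q'))) ≤
    ((1 / 2 : ℝ) : EReal) * (g p + g q) + ((1 / 2 : ℝ) : EReal) * (g p' + g q') :=
  stmt17_general g hsub p q p' q'
end

section
/- Let g : ℤⁿ → ℝ ∪ {∞} satisfy discrete midpoint convexity: g(x) + g(y) ≥ g(⌊(x+y)/2⌋) + g(⌈(x+y)/2⌉) for all x, y. Then dom g is 'Δ'-connected' in the following sense: for any x, y ∈ dom g there exists a sequence x = x₀, x₁, ..., x_m = y in dom g with ‖x_i − x_{i+1}‖_∞ ≤ 1 for all i. -/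
private lemma ereal_ne_top_of_add {a b c : EReal} (ha : a ≠ ⊥) (hb : b ≠ ⊥)
    (hc : c ≠ ⊤) (h : a + b ≤ c) : a ≠ ⊤ ∧ b ≠ ⊤ := by
  constructor
  · intro hA
    rw [hA, EReal.top_add_of_ne_bot hb] at h
    exact hc (top_le_iff.mp h)
  · intro hB
    rw [hB, EReal.add_top_of_ne_bot ha] at h
    exact hc (top_le_iff.mp h)

private lemma path_aux {n : ℕ} (g : (Fin n → ℤ) → EReal) (hg : ∀ x, g x ≠ ⊥)
    (hmc : ∀ x y : Fin n → ℤ,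
      g x + g y ≥ g (fun i => Int.fdiv (x i + y i) 2) + g (fun i => Int.fdiv (x i + y i + 1) 2)) :
    ∀ N : ℕ, ∀ x y : Fin n → ℤ, (∀ i, (x i - y i).natAbs ≤ N) → g x ≠ ⊤ → g y ≠ ⊤ →
      ∃ (m : ℕ) (c : ℕ → Fin n → ℤ), c 0 = x ∧ c m = y ∧
        (∀ k ≤ m, g (c k) ≠ ⊤) ∧ (∀ k < m, ∀ i, |c k i - c (k+1) i| ≤ 1) := by
  intro N
  induction N using Nat.strong_induction_on with
  | _ N IH =>
    intro x y hdist hx hy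
    by_cases hN : N ≤ 1
    · -- single step
      refine ⟨1, fun k => if k = 0 then x else y, by simp, by simp, ?_, ?_⟩
      · intro k hk
        interval_cases k <;> simp [hx, hy]
      · intro k hk i
        interval_cases k
        have := hdist i
        norm_num
        rw [abs_le]; omega
    · push_neg at hN
      set m₁ : Fin n → ℤ := fun i => Int.fdiv (x i + y i) 2 with hm₁
      set m₂ : Fin n → ℤ := fun i => Int.fdiv (x i + y i + 1) 2 with hm₂
      have hsum : g m₁ + g m₂ ≤ g x + g y := hmc x y
      have hxy : g x + g y ≠ ⊤ := (EReal.add_lt_top hx hy).ne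
      obtain ⟨h1, h2⟩ := ereal_ne_top_of_add (hg m₁) (hg m₂) hxy hsum
      have key : ∀ i, (x i - m₁ i).natAbs ≤ N - 1 ∧ (m₂ i - y i).natAbs ≤ N - 1 ∧
          |m₁ i - m₂ i| ≤ 1 := by
        intro i
        have hd := hdist i
        simp only [hm₁, hm₂]
        rw [Int.fdiv_eq_ediv_of_nonneg _ (by norm_num), Int.fdiv_eq_ediv_of_nonneg _ (by norm_num), abs_le]
        omega
      obtain ⟨ma, ca, hca0, hcam, hcadom, hcastep⟩ :=
        IH (N - 1) (by omega) x m₁ (fun i => (key i).1) hx h1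
      obtain ⟨mb, cb, hcb0, hcbm, hcbdom, hcbstep⟩ :=
        IH (N - 1) (by omega) m₂ y (fun i => (key i).2.1) h2 hy
      refine ⟨ma + 1 + mb, fun k => if k ≤ ma then ca k else cb (k - (ma + 1)), ?_, ?_, ?_, ?_⟩
      · simp [hca0]
      · simp only [if_neg (by omega : ¬ ma + 1 + mb ≤ ma)]
        rw [(by omega : ma + 1 + mb - (ma + 1) = mb), hcbm]
      · intro k hk
        by_cases h : k ≤ ma
        · simpa [h] using hcadom k h
        · simp only [if_neg h]
          exact hcbdom (k - (ma + 1)) (by omega)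
      · intro k hk i
        rcases lt_trichotomy k ma with h | h | h
        · simp only [if_pos h.le, if_pos (by omega : k + 1 ≤ ma)]
          exact hcastep k h i
        · subst h
          simp only [le_refl, if_pos, if_neg (by omega : ¬ k + 1 ≤ k),
            (by omega : k + 1 - (k + 1) = 0), hcam, hcb0]
          exact (key i).2.2
        · simp only [if_neg (by omega : ¬ k ≤ ma), if_neg (by omega : ¬ k + 1 ≤ ma),
            (by omega : k + 1 - (ma + 1) = k - (ma + 1) + 1)]
          exact hcbstep (k - (ma + 1)) (by omega) i

/-- If `g : ℤⁿ → ℝ ∪ {∞}` satisfies discrete midpoint convexity, then `dom g` is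
Δ-connected: any two points of `dom g` are joined inside `dom g` by a sequence of steps of
`l_∞`-length at most 1. -/
theorem stmt19 {n : ℕ} (g : (Fin n → ℤ) → EReal) (hg : ∀ x, g x ≠ ⊥)
    (hmc : ∀ x y : Fin n → ℤ,
      g x + g y ≥ g (fun i => Int.fdiv (x i + y i) 2) + g (fun i => Int.fdiv (x i + y i + 1) 2)) :
    ∀ x y : Fin n → ℤ, g x ≠ ⊤ → g y ≠ ⊤ →
      ∃ (m : ℕ) (c : Fin (m + 1) → Fin n → ℤ),
        c 0 = x ∧ c (Fin.last m) = y ∧ (∀ k, g (c k) ≠ ⊤) ∧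
        ∀ k : Fin m, ∀ i, |c k.castSucc i - c k.succ i| ≤ 1 := by
  intro x y hx hy
  obtain ⟨m, c, hc0, hcm, hdom, hstep⟩ := path_aux g hg hmc
    (Finset.univ.sup fun i => (x i - y i).natAbs) x y
    (fun i => Finset.le_sup (f := fun i => (x i - y i).natAbs) (Finset.mem_univ i)) hx hy
  refine ⟨m, fun k => c k.val, by simpa using hc0, by simpa [Fin.last] using hcm, ?_, ?_⟩
  · intro k; exact hdom k.val (by omega)
  · intro k i
    have := hstep k.val k.isLt i
    simpa [Fin.castSucc, Fin.succ] using this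
end
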